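/- For every δ ∈ (0,1), every k ∈ {1,…,n−2} and every ε ∈ (0,1): the derivative with respect to ε of D1(ε;k+1) + D2(ε;k+1) is strictly greater than the derivative with respect to ε of D1(ε;k) + D2(ε;k). -/

import Mathlib

/-!
Differentiating termwise, the claim splits into a strict inequality between the derivatives of
the `D1` parts and a weak one between those of the `D2` parts. Put `m = n - 1` and
`a = n - k - 2`, and let `g_{a,b}(x) = x^{-a} (1 - x)^{-b}`, so `g'_{a,b} = g_{a,b} (b/(1-x) - a/x)`.
Since `(a + 1) C(m, a + 1) = (k + 1) C(m, a)`, the `D1` part reduces to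
`(a + 1) g'_{a+1,b} < b g'_{a,b+1}` with `b = k + 1`; the difference of the two sides is
`(L² + b x) / (x^{a+2} (1 - x)^{b+2})` with `L = b x - (a + 1)(1 - x)`.
For `D2`, every `x ↦ x^q (1 - x)^{-(q+1)}` is increasing on `(0, 1)`, the coefficients
`C(m, i + q) / C(m, i)` decrease in `i` (log-concavity of the binomial coefficients), and
`D2(·; k + 1)` has one more, nonnegative, term.
-/

open Finset

/-- `D1(ε;k) = ((1−δ)/C(n−1,n−k−1))·ε^{−(n−k−1)}·(1−ε)^{−(k+1)}`. -/
noncomputable def D1 (n k : ℕ) (δ ε : ℝ) : ℝ :=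
  ((1 - δ) / ((n - 1).choose (n - k - 1) : ℝ)) * (ε ^ (n - k - 1))⁻¹ *
    ((1 - ε) ^ (k + 1))⁻¹

/-- `D2(ε;k) = δ·Σ_{q=0}^{k} (C(n−1,n−k−1+q)/C(n−1,n−k−1))·ε^q·(1−ε)^{−(q+1)}`. -/
noncomputable def D2 (n k : ℕ) (δ ε : ℝ) : ℝ :=
  δ * ∑ q ∈ range (k + 1),
    (((n - 1).choose (n - k - 1 + q) : ℝ) / ((n - 1).choose (n - k - 1) : ℝ)) *
      ε ^ q * ((1 - ε) ^ (q + 1))⁻¹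

theorem hasDerivAt_zpow_mul_one_sub_zpow (a b : ℤ) {x : ℝ} (hx : x ≠ 0) (hx' : 1 - x ≠ 0) :
    HasDerivAt (fun y => y ^ a * (1 - y) ^ b) (x ^ a * (1 - x) ^ b * (a / x - b / (1 - x))) x := by
  have ha := hasDerivAt_zpow a x (Or.inl hx)
  have hb := (hasDerivAt_zpow b (1 - x) (Or.inl hx')).comp x ((hasDerivAt_id x).const_sub 1)
  refine (ha.mul hb).congr_deriv ?_
  rw [Function.comp_apply, zpow_sub_one₀ hx, zpow_sub_one₀ hx']
  field_simp
  ring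

theorem inv_pow_mul_inv_one_sub_pow_deriv_lt (a b : ℕ) {x : ℝ} (hx0 : 0 < x) (hx1 : x < 1) :
    (a + 1) * ((x ^ (a + 1))⁻¹ * ((1 - x) ^ b)⁻¹ * (b / (1 - x) - (a + 1) / x)) <
      b * ((x ^ a)⁻¹ * ((1 - x) ^ (b + 1))⁻¹ * ((b + 1) / (1 - x) - a / x)) := by
  have hy : 0 < 1 - x := sub_pos.mpr hx1
  set L := b * x - (a + 1) * (1 - x)
  have key : b * ((x ^ a)⁻¹ * ((1 - x) ^ (b + 1))⁻¹ * ((b + 1) / (1 - x) - a / x)) -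
      (a + 1) * ((x ^ (a + 1))⁻¹ * ((1 - x) ^ b)⁻¹ * (b / (1 - x) - (a + 1) / x)) =
      (L ^ 2 + b * x) / (x ^ (a + 2) * (1 - x) ^ (b + 2)) := by
    field_simp
    ring
  have hnum : 0 < L ^ 2 + b * x := by
    rcases Nat.eq_zero_or_pos b with rfl | hb
    · simp only [L, CharP.cast_eq_zero, zero_mul, zero_sub, add_zero, neg_sq]
      positivity
    · positivity
  rw [← sub_pos, key]
  positivity

theorem Nat.choose_add_succ_mul_choose_le (m i q : ℕ) :
    m.choose (i + q + 1) * m.choose i ≤ m.choose (i + q) * m.choose (i + 1) := by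
  have hi := Nat.choose_succ_right_eq m i
  have hiq := Nat.choose_succ_right_eq m (i + q)
  have key : (m - (i + q)) * (i + 1) ≤ (m - i) * (i + q + 1) :=
    Nat.mul_le_mul (by omega) (by omega)
  refine Nat.le_of_mul_le_mul_right (c := (i + q + 1) * (i + 1)) ?_ (by positivity)
  calc m.choose (i + q + 1) * m.choose i * ((i + q + 1) * (i + 1))
      = m.choose (i + q + 1) * (i + q + 1) * m.choose i * (i + 1) := by ring
    _ = m.choose (i + q) * m.choose i * ((m - (i + q)) * (i + 1)) := by rw [hiq]; ring
    _ ≤ m.choose (i + q) * m.choose i * ((m - i) * (i + q + 1)) := Nat.mul_le_mul_left _ key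
    _ = m.choose (i + q) * (m.choose i * (m - i)) * (i + q + 1) := by ring
    _ = m.choose (i + q) * m.choose (i + 1) * ((i + q + 1) * (i + 1)) := by rw [← hi]; ring

noncomputable def D1' (n k : ℕ) (δ x : ℝ) : ℝ :=
  (1 - δ) / ((n - 1).choose (n - k - 1) : ℝ) *
    ((x ^ (n - k - 1))⁻¹ * ((1 - x) ^ (k + 1))⁻¹ * ((k + 1) / (1 - x) - (n - k - 1 : ℕ) / x))

noncomputable def D2' (n k : ℕ) (δ x : ℝ) : ℝ :=
  δ * ∑ q ∈ range (k + 1),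
    ((n - 1).choose (n - k - 1 + q) : ℝ) / ((n - 1).choose (n - k - 1) : ℝ) *
      (x ^ q * ((1 - x) ^ (q + 1))⁻¹ * (q / x + (q + 1) / (1 - x)))

section

variable (n k : ℕ) (δ : ℝ) {x : ℝ}

theorem hasDerivAt_D1 (hx : x ≠ 0) (hx' : 1 - x ≠ 0) :
    HasDerivAt (D1 n k δ) (D1' n k δ x) x := by
  have h := (hasDerivAt_zpow_mul_one_sub_zpow (-(n - k - 1 : ℕ)) (-(k + 1 : ℕ)) hx hx').const_mul
    ((1 - δ) / ((n - 1).choose (n - k - 1) : ℝ))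
  simp only [zpow_neg, zpow_natCast, ← mul_assoc] at h
  refine h.congr_deriv ?_
  rw [D1']
  push_cast
  ring

theorem hasDerivAt_D2 (hx : x ≠ 0) (hx' : 1 - x ≠ 0) :
    HasDerivAt (D2 n k δ) (D2' n k δ x) x := by
  refine (HasDerivAt.fun_sum fun q _ => ?_).const_mul δ
  have h := (hasDerivAt_zpow_mul_one_sub_zpow q (-(q + 1 : ℕ)) hx hx').const_mul
    (((n - 1).choose (n - k - 1 + q) : ℝ) / ((n - 1).choose (n - k - 1) : ℝ))
  simp only [zpow_neg, zpow_natCast, ← mul_assoc] at h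
  refine h.congr_deriv ?_
  push_cast
  ring

end

section

variable {n k : ℕ} {δ x : ℝ}

theorem D1'_lt_D1'_succ (hk : k + 2 ≤ n) (hδ : δ < 1) (hx0 : 0 < x) (hx1 : x < 1) :
    D1' n k δ x < D1' n (k + 1) δ x := by
  obtain ⟨a, rfl⟩ : ∃ a, n = a + (k + 1) + 1 := ⟨n - k - 2, by omega⟩
  have hC : ((a + (k + 1)).choose a : ℝ) = (a + (k + 1)).choose (a + 1) * (a + 1) / (k + 1) := by
    have h := Nat.choose_succ_right_eq (a + (k + 1)) a
    rw [Nat.add_sub_cancel_left] at h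
    rw [eq_div_iff (by positivity)]
    exact_mod_cast h.symm
  have hc : 0 < (1 - δ) / ((a + (k + 1)).choose (a + 1) * (a + 1)) := by
    have : (0 : ℝ) < (a + (k + 1)).choose (a + 1) := by exact_mod_cast Nat.choose_pos (by omega)
    have : 0 < 1 - δ := by linarith
    positivity
  have hlt := mul_lt_mul_of_pos_left (inv_pow_mul_inv_one_sub_pow_deriv_lt a (k + 1) hx0 hx1) hc
  simp only [D1', show a + (k + 1) + 1 - 1 = a + (k + 1) by omega,
    show a + (k + 1) + 1 - k - 1 = a + 1 by omega, show a + (k + 1) + 1 - (k + 1) - 1 = a by omega]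
  rw [hC]
  push_cast at hlt ⊢
  refine (Eq.trans_lt ?_ hlt).trans_eq ?_ <;> field_simp

theorem D2'_le_D2'_succ (hk : k + 2 ≤ n) (hδ : 0 ≤ δ) (hx0 : 0 < x) (hx1 : x < 1) :
    D2' n k δ x ≤ D2' n (k + 1) δ x := by
  obtain ⟨a, rfl⟩ : ∃ a, n = a + (k + 1) + 1 := ⟨n - k - 2, by omega⟩
  simp only [D2', show a + (k + 1) + 1 - 1 = a + (k + 1) by omega,
    show a + (k + 1) + 1 - k - 1 = a + 1 by omega, show a + (k + 1) + 1 - (k + 1) - 1 = a by omega]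
  have ha : (0 : ℝ) < (a + (k + 1)).choose a := by exact_mod_cast Nat.choose_pos (by omega)
  have ha' : (0 : ℝ) < (a + (k + 1)).choose (a + 1) := by exact_mod_cast Nat.choose_pos (by omega)
  rw [sum_range_succ _ (k + 1)]
  refine mul_le_mul_of_nonneg_left (le_add_of_le_of_nonneg (sum_le_sum fun q _ => ?_) ?_) hδ
  · refine mul_le_mul_of_nonneg_right ?_ (by positivity)
    rw [div_le_div_iff₀ ha' ha, add_right_comm]
    exact_mod_cast Nat.choose_add_succ_mul_choose_le _ a q
  · positivity

end

theorem deriv_D1_add_D2_strict_order_general (n : ℕ) (hn : 3 ≤ n)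
    (δ : ℝ) (hδ0 : 0 < δ) (hδ1 : δ < 1)
    (k : ℕ) (hk2 : k ≤ n - 2)
    (ε : ℝ) (hε0 : 0 < ε) (hε1 : ε < 1) :
    deriv (fun x => D1 n (k + 1) δ x + D2 n (k + 1) δ x) ε >
      deriv (fun x => D1 n k δ x + D2 n k δ x) ε := by
  have hk : k + 2 ≤ n := by omega
  have h0 : ε ≠ 0 := hε0.ne'
  have h1 : 1 - ε ≠ 0 := (sub_pos.mpr hε1).ne'
  rw [((hasDerivAt_D1 n k δ h0 h1).fun_add (hasDerivAt_D2 n k δ h0 h1)).deriv,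
    ((hasDerivAt_D1 n (k + 1) δ h0 h1).fun_add (hasDerivAt_D2 n (k + 1) δ h0 h1)).deriv]
  exact add_lt_add_of_lt_of_le (D1'_lt_D1'_succ hk hδ1 hε0 hε1)
    (D2'_le_D2'_succ hk hδ0.le hε0 hε1)

/-- For every `δ ∈ (0,1)`, every `k ∈ {1,…,n−2}` and every `ε ∈ (0,1)`:
the derivative of `ε ↦ D1(ε;k+1) + D2(ε;k+1)` is strictly greater than the
derivative of `ε ↦ D1(ε;k) + D2(ε;k)`. -/
theorem deriv_D1_add_D2_strict_order (n : ℕ) (hn : 3 ≤ n)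
    (δ : ℝ) (hδ0 : 0 < δ) (hδ1 : δ < 1)
    (k : ℕ) (hk1 : 1 ≤ k) (hk2 : k ≤ n - 2)
    (ε : ℝ) (hε0 : 0 < ε) (hε1 : ε < 1) :
    deriv (fun x => D1 n (k + 1) δ x + D2 n (k + 1) δ x) ε >
      deriv (fun x => D1 n k δ x + D2 n k δ x) ε :=
  deriv_D1_add_D2_strict_order_general n hn δ hδ0 hδ1 k hk2 ε hε0 hε1
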